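/- Let U ⊆ ℝ^n be open, g a Riemannian metric on U, and let Γ̃ encode a smooth connection on U that is orthogonal for g and torsion-free (Γ̃ x v w = Γ̃ x w v for all x, v, w). Let Γ encode another smooth connection, with contorsion K x v w := Γ x v w − Γ̃ x v w and K♭ x z v w := g x z (K x v w). Then Γ is orthogonal for g and has the same geodesics as Γ̃ if and only if K♭ x is a totally antisymmetric trilinear form for every x ∈ U (it changes sign under any transposition of its three vector arguments). -/

import Mathlib

/-- The covariant derivative `∇^Γ_X Y` of the vector field `Y` along the vector field `X`,
for the connection encoded by `Γ`. -/
noncomputable def covDeriv {n : ℕ}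
    (Γ : (Fin n → ℝ) → (Fin n → ℝ) →L[ℝ] (Fin n → ℝ) →L[ℝ] (Fin n → ℝ))
    (X Y : (Fin n → ℝ) → Fin n → ℝ) (x : Fin n → ℝ) : Fin n → ℝ :=
  fderiv ℝ Y x (X x) + Γ x (X x) (Y x)

/-- The connection encoded by `Γ` is orthogonal (compatible) with the metric `g` on `U`. -/
def IsOrthogonalConn {n : ℕ} (U : Set (Fin n → ℝ))
    (g : (Fin n → ℝ) → (Fin n → ℝ) →L[ℝ] (Fin n → ℝ) →L[ℝ] ℝ)
    (Γ : (Fin n → ℝ) → (Fin n → ℝ) →L[ℝ] (Fin n → ℝ) →L[ℝ] (Fin n → ℝ)) : Prop :=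
  ∀ X Y Z : (Fin n → ℝ) → Fin n → ℝ,
    ContDiffOn ℝ (⊤ : ℕ∞) X U → ContDiffOn ℝ (⊤ : ℕ∞) Y U → ContDiffOn ℝ (⊤ : ℕ∞) Z U →
    ∀ x ∈ U,
      fderiv ℝ (fun y => g y (Y y) (Z y)) x (X x) =
        g x (covDeriv Γ X Y x) (Z x) + g x (Y x) (covDeriv Γ X Z x)

/-- `c` is a geodesic of the connection encoded by `Γ`, defined on a nonempty open
interval `I` with values in `U`. -/
def IsGeodesic {n : ℕ} (U : Set (Fin n → ℝ))
    (Γ : (Fin n → ℝ) → (Fin n → ℝ) →L[ℝ] (Fin n → ℝ) →L[ℝ] (Fin n → ℝ))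
    (I : Set ℝ) (c : ℝ → Fin n → ℝ) : Prop :=
  IsOpen I ∧ I.Nonempty ∧ I.OrdConnected ∧
  (∀ t ∈ I, c t ∈ U) ∧
  (∀ t ∈ I, DifferentiableAt ℝ c t) ∧
  (∀ t ∈ I, DifferentiableAt ℝ (deriv c) t) ∧
  (∀ t ∈ I, deriv (deriv c) t + Γ (c t) (deriv c t) (deriv c t) = 0)

open Set in
lemma exists_geodesic_aux {n : ℕ} {U : Set (Fin n → ℝ)} (hU : IsOpen U)
    (Γ' : (Fin n → ℝ) → (Fin n → ℝ) →L[ℝ] (Fin n → ℝ) →L[ℝ] (Fin n → ℝ))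
    (hΓ' : ContDiffOn ℝ (⊤ : ℕ∞) Γ' U) {x₀ : Fin n → ℝ} (hx₀ : x₀ ∈ U) (v₀ : Fin n → ℝ) :
    ∃ (I : Set ℝ) (c : ℝ → Fin n → ℝ),
      (IsOpen I ∧ I.Nonempty ∧ I.OrdConnected ∧
       (∀ t ∈ I, c t ∈ U) ∧
       (∀ t ∈ I, DifferentiableAt ℝ c t) ∧
       (∀ t ∈ I, DifferentiableAt ℝ (deriv c) t) ∧
       (∀ t ∈ I, deriv (deriv c) t + Γ' (c t) (deriv c t) (deriv c t) = 0)) ∧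
      (0:ℝ) ∈ I ∧ c 0 = x₀ ∧ deriv c 0 = v₀ := by
  set E := (Fin n → ℝ) × (Fin n → ℝ)
  set F : E → E := fun y => (y.2, -(Γ' y.1 y.2 y.2)) with hF
  have hΓat : ContDiffAt ℝ 1 Γ' x₀ := (hΓ'.contDiffAt (hU.mem_nhds hx₀)).of_le (by simp)
  have hFat : ContDiffAt ℝ 1 F (x₀, v₀) := by
    apply ContDiffAt.prodMk
    · exact contDiffAt_snd
    · exact (((hΓat.comp (x₀, v₀) contDiffAt_fst).clm_apply contDiffAt_snd).clm_apply
        contDiffAt_snd).neg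
  obtain ⟨f, hf0, ε, hε, hf⟩ := hFat.exists_forall_mem_closedBall_exists_eq_forall_mem_Ioo_hasDerivAt₀ 0
  set c : ℝ → Fin n → ℝ := fun t => (f t).1 with hc
  set p : ℝ → Fin n → ℝ := fun t => (f t).2 with hp
  have h0mem : (0:ℝ) ∈ Ioo (0 - ε) (0 + ε) := by constructor <;> linarith
  have hcd : ∀ t ∈ Ioo (0 - ε) (0 + ε), HasDerivAt c (p t) t := by
    intro t ht
    exact (ContinuousLinearMap.fst ℝ (Fin n → ℝ) (Fin n → ℝ)).hasFDerivAt.comp_hasDerivAt t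
      (hf t ht)
  have hpd : ∀ t ∈ Ioo (0 - ε) (0 + ε),
      HasDerivAt p (-(Γ' (c t) (p t) (p t))) t := by
    intro t ht
    exact (ContinuousLinearMap.snd ℝ (Fin n → ℝ) (Fin n → ℝ)).hasFDerivAt.comp_hasDerivAt t
      (hf t ht)
  have hderiv : ∀ t ∈ Ioo (0 - ε) (0 + ε), deriv c t = p t := fun t ht => (hcd t ht).deriv
  -- choose δ so that c maps into U
  have hc0 : c 0 = x₀ := by simp [hc, hf0]
  have hcont : ContinuousAt c 0 := (hcd 0 h0mem).differentiableAt.continuousAt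
  have hUc : c ⁻¹' U ∈ nhds (0:ℝ) := hcont.preimage_mem_nhds (by rw [hc0]; exact hU.mem_nhds hx₀)
  obtain ⟨δ, hδ, hball⟩ := Metric.mem_nhds_iff.mp hUc
  set δ' := min δ ε with hδ'
  have hδ'0 : 0 < δ' := lt_min hδ hε
  have hsub : Ioo (-δ') δ' ⊆ Ioo (0 - ε) (0 + ε) := by
    intro t ht
    have h1 := ht.1; have h2 := ht.2
    have : δ' ≤ ε := min_le_right _ _
    constructor <;> [linarith; linarith]
  refine ⟨Ioo (-δ') δ', c, ⟨isOpen_Ioo, ⟨0, by constructor <;> linarith⟩, ordConnected_Ioo,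
    ?_, ?_, ?_, ?_⟩, by constructor <;> linarith, hc0, ?_⟩
  · intro t ht
    apply hball
    have : δ' ≤ δ := min_le_left _ _
    simp only [Metric.mem_ball, Real.dist_eq, sub_zero]
    rw [abs_lt]
    exact ⟨by linarith [ht.1], by linarith [ht.2]⟩
  · exact fun t ht => (hcd t (hsub ht)).differentiableAt
  · intro t ht
    have heq : deriv c =ᶠ[nhds t] p :=
      Filter.eventuallyEq_of_mem (isOpen_Ioo.mem_nhds (hsub ht)) hderiv
    exact heq.differentiableAt_iff.mpr (hpd t (hsub ht)).differentiableAt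
  · intro t ht
    have heq : deriv c =ᶠ[nhds t] p :=
      Filter.eventuallyEq_of_mem (isOpen_Ioo.mem_nhds (hsub ht)) hderiv
    rw [heq.deriv_eq, (hpd t (hsub ht)).deriv, hderiv t (hsub ht)]
    abel
  · rw [hderiv 0 h0mem]
    simp [hp, hf0]

/-- `Γ` is orthogonal for `g` and has the same geodesics as the torsion-free orthogonal
connection `Γ'` iff `K♭ x z v w := g x z (Γ x v w − Γ' x v w)` is totally antisymmetric
in its three vector arguments, at every point of `U`. -/
theorem statement2 {n : ℕ} (U : Set (Fin n → ℝ)) (hU : IsOpen U)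
    (g : (Fin n → ℝ) → (Fin n → ℝ) →L[ℝ] (Fin n → ℝ) →L[ℝ] ℝ)
    (hg : ContDiffOn ℝ (⊤ : ℕ∞) g U)
    (hgsymm : ∀ x ∈ U, ∀ v w : Fin n → ℝ, g x v w = g x w v)
    (hgpos : ∀ x ∈ U, ∀ v : Fin n → ℝ, v ≠ 0 → 0 < g x v v)
    (Γ Γ' : (Fin n → ℝ) → (Fin n → ℝ) →L[ℝ] (Fin n → ℝ) →L[ℝ] (Fin n → ℝ))
    (hΓ : ContDiffOn ℝ (⊤ : ℕ∞) Γ U) (hΓ' : ContDiffOn ℝ (⊤ : ℕ∞) Γ' U)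
    (hΓ'orth : IsOrthogonalConn U g Γ')
    (hΓ'tf : ∀ x : Fin n → ℝ, ∀ v w : Fin n → ℝ, Γ' x v w = Γ' x w v) :
    (IsOrthogonalConn U g Γ ∧
      ∀ (I : Set ℝ) (c : ℝ → Fin n → ℝ), IsGeodesic U Γ I c ↔ IsGeodesic U Γ' I c) ↔
      (∀ x ∈ U, ∀ z v w : Fin n → ℝ,
        g x z (Γ x v w - Γ' x v w) = -(g x v (Γ x z w - Γ' x z w)) ∧
        g x z (Γ x v w - Γ' x v w) = -(g x z (Γ x w v - Γ' x w v)) ∧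
        g x z (Γ x v w - Γ' x v w) = -(g x w (Γ x v z - Γ' x v z))) := by
  constructor
  · rintro ⟨horth, hgeo⟩
    intro x hx
    -- condition from orthogonality
    have h3 : ∀ z v w : Fin n → ℝ,
        g x z (Γ x v w - Γ' x v w) = -(g x w (Γ x v z - Γ' x v z)) := by
      intro z v w
      have e1 := horth (fun _ => v) (fun _ => w) (fun _ => z)
        contDiffOn_const contDiffOn_const contDiffOn_const x hx
      have e2 := hΓ'orth (fun _ => v) (fun _ => w) (fun _ => z)
        contDiffOn_const contDiffOn_const contDiffOn_const x hx
      simp only [covDeriv, fderiv_fun_const, Pi.zero_apply, ContinuousLinearMap.zero_apply,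
        zero_add] at e1 e2
      have key : g x (Γ x v w) z + g x w (Γ x v z)
          = g x (Γ' x v w) z + g x w (Γ' x v z) := e1.symm.trans e2
      rw [map_sub, map_sub, hgsymm x hx z (Γ x v w), hgsymm x hx z (Γ' x v w)]
      linarith
    -- same geodesics gives equality of symmetric parts
    have hK0 : ∀ v, Γ x v v = Γ' x v v := by
      intro v
      obtain ⟨I, c, hgeod, h0I, hc0, hc0'⟩ := exists_geodesic_aux hU Γ' hΓ' hx v
      have hg2 : IsGeodesic U Γ I c := (hgeo I c).mpr hgeod
      have e1 := hgeod.2.2.2.2.2.2 0 h0I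
      have e2 := hg2.2.2.2.2.2.2 0 h0I
      rw [hc0, hc0'] at e1 e2
      have a1 : Γ' x v v = -(deriv (deriv c) 0) := eq_neg_of_add_eq_zero_right e1
      have a2 : Γ x v v = -(deriv (deriv c) 0) := eq_neg_of_add_eq_zero_right e2
      rw [a1, a2]
    -- antisymmetry in v w
    have hKvw : ∀ v w, Γ x v w - Γ' x v w = -(Γ x w v - Γ' x w v) := by
      intro v w
      have h := hK0 (v + w)
      simp only [map_add, ContinuousLinearMap.add_apply] at h
      rw [hK0 v, hK0 w] at h
      linear_combination h
    intro z v w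
    refine ⟨?_, ?_, h3 z v w⟩
    · calc g x z (Γ x v w - Γ' x v w)
          = -(g x z (Γ x w v - Γ' x w v)) := by rw [hKvw v w, map_neg]
        _ = g x v (Γ x w z - Γ' x w z) := by rw [h3 z w v, neg_neg]
        _ = -(g x v (Γ x z w - Γ' x z w)) := by rw [hKvw w z, map_neg]
    · rw [hKvw v w, map_neg]
  · intro h
    have hK0 : ∀ x ∈ U, ∀ v, Γ x v v = Γ' x v v := by
      intro x hx v
      have h2 := (h x hx (Γ x v v - Γ' x v v) v v).2.1
      have hzero : g x (Γ x v v - Γ' x v v) (Γ x v v - Γ' x v v) = 0 := by linarith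
      by_contra hne
      exact (hgpos x hx _ (sub_ne_zero.mpr hne)).ne' hzero
    constructor
    · intro X Y Z hX hY hZ x hx
      have e2 := hΓ'orth X Y Z hX hY hZ x hx
      rw [e2]
      have hYd : covDeriv Γ X Y x
          = covDeriv Γ' X Y x + (Γ x (X x) (Y x) - Γ' x (X x) (Y x)) := by
        simp only [covDeriv]; abel
      have hZd : covDeriv Γ X Z x
          = covDeriv Γ' X Z x + (Γ x (X x) (Z x) - Γ' x (X x) (Z x)) := by
        simp only [covDeriv]; abel
      rw [hYd, hZd]
      have key := (h x hx (Z x) (X x) (Y x)).2.2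
      have hsym := hgsymm x hx (Z x) (Γ x (X x) (Y x) - Γ' x (X x) (Y x))
      simp only [map_add, ContinuousLinearMap.add_apply, map_sub,
        ContinuousLinearMap.sub_apply] at key hsym ⊢
      linarith
    · intro I c
      have main : ∀ (Γ₁ Γ₂ : (Fin n → ℝ) → (Fin n → ℝ) →L[ℝ] (Fin n → ℝ) →L[ℝ] (Fin n → ℝ)),
          (∀ x ∈ U, ∀ v, Γ₁ x v v = Γ₂ x v v) →
          IsGeodesic U Γ₁ I c → IsGeodesic U Γ₂ I c := by
        rintro Γ₁ Γ₂ heq ⟨h1, h2, h3, h4, h5, h6, h7⟩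
        exact ⟨h1, h2, h3, h4, h5, h6, fun t ht => by
          rw [← heq (c t) (h4 t ht) (deriv c t)]; exact h7 t ht⟩
      exact ⟨main Γ Γ' hK0, main Γ' Γ (fun x hx v => (hK0 x hx v).symm)⟩
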